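/- arXiv:1505.06610 — 3 statements merged into one kernel-verified Lean document; each statement's English description precedes it below -/
import Mathlib

section
/- If n_0, k_0 are nonnegative integers less than b^M with ‖n_0 ⊖ k_0‖_b = b^{d̃} (meaning n_0 ⊖ k_0 ∈ [b^{d̃}, b^{d̃+1})), then n_0 and k_0 lie in the same block [ṅ b^{d̃+1}, (ṅ+1) b^{d̃+1}) for some integer ṅ ≥ 0; i.e., ⌊n_0 / b^{d̃+1}⌋ = ⌊k_0 / b^{d̃+1}⌋. -/
open Finset
open scoped Classical

/-- The `j`-th `b`-adic digit of `x ∈ [0,1)` (for `j ≥ 1`). -/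
noncomputable def bdigit (b : ℕ) (x : ℝ) (j : ℕ) : ℕ := ⌊x * (b:ℝ)^j⌋₊ % b

/-- Truncation `[x]_m` to the first `m` `b`-adic digits. -/
noncomputable def btrunc (b m : ℕ) (x : ℝ) : ℝ :=
  ∑ j ∈ Finset.Icc 1 m, (bdigit b x j : ℝ) / (b:ℝ)^j

/-- Digitwise addition mod `b` : the `b`-adic digital shift `x ⊕ y`. -/
noncomputable def bshift (b : ℕ) (x y : ℝ) : ℝ :=
  ∑' j : ℕ, (((bdigit b x (j+1) + bdigit b y (j+1)) % b : ℕ) : ℝ) / (b:ℝ)^(j+1)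

/-- Digitwise subtraction mod `b` : `x ⊖ y`. -/
noncomputable def bsub (b : ℕ) (x y : ℝ) : ℝ :=
  ∑' j : ℕ, (((bdigit b x (j+1) + (b - bdigit b y (j+1))) % b : ℕ) : ℝ) / (b:ℝ)^(j+1)

/-- The `b`-adic valuation `‖x‖_b = b^{-k-1}` where the first `k` digits vanish;
`‖x‖_b = 0` if all digits vanish. -/
noncomputable def bval (b : ℕ) (x : ℝ) : ℝ :=
  if h : ∃ j : ℕ, bdigit b x (j+1) ≠ 0 then ((b:ℝ))⁻¹ ^ (Nat.find h + 1) else 0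

/-- Coordinatewise product valuation of a point of `[0,1)^s`. -/
noncomputable def bvalPt (b s : ℕ) (x : Fin s → ℝ) : ℝ := ∏ i, bval b (x i)

/-- Coordinatewise digitwise subtraction mod `b`. -/
noncomputable def bsubPt (b s : ℕ) (x y : Fin s → ℝ) : Fin s → ℝ := fun i => bsub b (x i) (y i)

/-- `E_m`: the set of `b`-adic rationals in `[0,1)` with denominator `b^m`. -/
def Eset (b m : ℕ) : Set ℝ :=
  {x | ∃ c : ℕ → ℕ, (∀ j, c j < b) ∧ x = ∑ j ∈ Finset.Icc 1 m, (c j : ℝ) / (b:ℝ)^j}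

/-- A `(t,m,s)`-net in base `b` (as a point family indexed by `n < b^m`): every
elementary `b`-adic interval of volume `≥ b^{t-m}` gets exactly its share of points. -/
def IsNet (b t m s : ℕ) (P : ℕ → Fin s → ℝ) : Prop :=
  ∀ d a : Fin s → ℕ, (∀ i, a i < b ^ d i) → (∑ i, d i) + t ≤ m →
    ((Finset.range (b^m)).filter (fun n => ∀ i,
      (a i : ℝ) / (b:ℝ)^(d i) ≤ P n i ∧ P n i < ((a i : ℝ) + 1) / (b:ℝ)^(d i))).card
      = b ^ (m - (∑ i, d i))

/-- A `(u,m,e,s)`-net in base `b` in the sense of Niederreiter–Xing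
(elementary intervals with `e i ∣ d i`). -/
def IsNetE (b u m s : ℕ) (e : Fin s → ℕ) (P : ℕ → Fin s → ℝ) : Prop :=
  ∀ d a : Fin s → ℕ, (∀ i, e i ∣ d i) → (∀ i, a i < b ^ d i) → (∑ i, d i) + u ≤ m →
    ((Finset.range (b^m)).filter (fun n => ∀ i,
      (a i : ℝ) / (b:ℝ)^(d i) ≤ P n i ∧ P n i < ((a i : ℝ) + 1) / (b:ℝ)^(d i))).card
      = b ^ (m - (∑ i, d i))

/-- A `(t,s)`-sequence in base `b`: the truncated points of every block of
length `b^m` (for `m > t`) form a `(t,m,s)`-net. -/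
def IsSeq (b t s : ℕ) (x : ℕ → Fin s → ℝ) : Prop :=
  ∀ k m : ℕ, t < m → IsNet b t m s (fun n i => btrunc b m (x (k * b^m + n) i))

/-- A `(u,e,s)`-sequence in base `b` in the sense of Niederreiter–Xing. -/
def IsSeqE (b u s : ℕ) (e : Fin s → ℕ) (x : ℕ → Fin s → ℝ) : Prop :=
  ∀ k m : ℕ, u < m → IsNetE b u m s e (fun n i => btrunc b m (x (k * b^m + n) i))

/-- The `j`-th base-`b` digit of a natural number. -/
def natDigit (b n j : ℕ) : ℕ := n / b^j % b

/-- Digitwise addition mod `b` of naturals, on the first `m` digits: `n ⊕ q`. -/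
def natShiftAdd (b m n q : ℕ) : ℕ :=
  ∑ j ∈ Finset.range m, ((natDigit b n j + natDigit b q j) % b) * b^j

/-- Digitwise subtraction mod `b` of naturals, on the first `m` digits: `n ⊖ q`. -/
def natShiftSub (b m n q : ℕ) : ℕ :=
  ∑ j ∈ Finset.range m, ((natDigit b n j + (b - natDigit b q j)) % b) * b^j

/-- Digitwise subtraction mod `b` of naturals (all digits). -/
def natSub (b n k : ℕ) : ℕ := natShiftSub b (n + k + 1) n k

/-- `‖n‖_b = b^k` for `n ∈ [b^k, b^{k+1})`. -/
def natVal (b n : ℕ) : ℕ := b ^ Nat.log b n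

/-- A `d`-admissible point set `(x_n)_{0 ≤ n < b^m}` in base `b`. -/
def AdmissiblePtSet (b d m s : ℕ) (x : ℕ → Fin s → ℝ) : Prop :=
  ∀ k n : ℕ, k < n → n < b^m →
    bvalPt b s (bsubPt b s (x n) (x k)) > ((b:ℝ))⁻¹ ^ (m + d)

/-- A `d`-admissible sequence in base `b`. -/
def AdmissibleSeq (b d s : ℕ) (x : ℕ → Fin s → ℝ) : Prop :=
  ∀ n k : ℕ, k < n →
    (natVal b (natSub b n k) : ℝ) * bvalPt b s (bsubPt b s (x n) (x k)) ≥ ((b:ℝ))⁻¹ ^ d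

/-- Star discrepancy of the first `N` points of `y`, with anchored boxes `[0,γ)`. -/
noncomputable def starDisc (s N : ℕ) (y : ℕ → Fin s → ℝ) : ℝ :=
  sSup {v : ℝ | ∃ γ : Fin s → ℝ, (∀ i, 0 < γ i ∧ γ i ≤ 1) ∧
    v = |(((Finset.range N).filter (fun n => ∀ i, y n i < γ i)).card : ℝ)
          - (N : ℝ) * ∏ i, γ i| / (N : ℝ)}

/-!
A nonzero digit in position `j` of `n₀ ⊖ k₀` contributes at least `b^j`, so `n₀ ⊖ k₀ < b^{d̃+1}`
forces the digits of `n₀` and `k₀` to agree from position `d̃ + 1` on (beyond position `M` both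
vanish). These are exactly the digits of `⌊n₀ / b^{d̃+1}⌋` and `⌊k₀ / b^{d̃+1}⌋`.
-/

lemma mod_pow_eq_of_natDigit_eq {b x y N : ℕ} (h : ∀ j < N, natDigit b x j = natDigit b y j) :
    x % b ^ N = y % b ^ N := by
  induction N with
  | zero => simp only [pow_zero, Nat.mod_one]
  | succ N ih =>
    have hN : x / b ^ N % b = y / b ^ N % b := h N N.lt_succ_self
    rw [Nat.mod_pow_succ, Nat.mod_pow_succ, ih fun j hj => h j (by omega), hN]

lemma eq_of_natDigit_eq {b x y N : ℕ} (hx : x < b ^ N) (hy : y < b ^ N)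
    (h : ∀ j < N, natDigit b x j = natDigit b y j) : x = y := by
  simpa only [Nat.mod_eq_of_lt hx, Nat.mod_eq_of_lt hy] using mod_pow_eq_of_natDigit_eq h

lemma natDigit_div_pow (b n i j : ℕ) : natDigit b (n / b ^ i) j = natDigit b n (i + j) := by
  simp only [natDigit, Nat.div_div_eq_div_mul, pow_add]

lemma natDigit_eq_zero_of_lt_pow {b n j : ℕ} (h : n < b ^ j) : natDigit b n j = 0 := by
  simp [natDigit, Nat.div_eq_of_lt h]

lemma eq_of_add_sub_mod_eq_zero {b a c : ℕ} (ha : a < b) (hc : c < b)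
    (h : (a + (b - c)) % b = 0) : a = c := by
  rcases lt_or_ge (a + (b - c)) b with hlt | hge
  · rw [Nat.mod_eq_of_lt hlt] at h
    omega
  · rw [Nat.mod_eq_sub_mod hge, Nat.mod_eq_of_lt (by omega)] at h
    omega

lemma natShiftSub_term_le {b M n k j : ℕ} (hj : j < M) :
    (natDigit b n j + (b - natDigit b k j)) % b * b ^ j ≤ natShiftSub b M n k :=
  Finset.single_le_sum (f := fun j => (natDigit b n j + (b - natDigit b k j)) % b * b ^ j)
    (fun _ _ => Nat.zero_le _) (Finset.mem_range.2 hj)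

lemma natDigit_eq_of_natShiftSub_lt_pow {b M n k j : ℕ} (hb : 0 < b) (hj : j < M)
    (h : natShiftSub b M n k < b ^ j) : natDigit b n j = natDigit b k j := by
  have hterm := (natShiftSub_term_le hj).trans_lt h
  have hzero : (natDigit b n j + (b - natDigit b k j)) % b = 0 := by
    by_contra hne
    exact hterm.not_ge (Nat.le_mul_of_pos_left _ (Nat.pos_of_ne_zero hne))
  exact eq_of_add_sub_mod_eq_zero (Nat.mod_lt _ hb) (Nat.mod_lt _ hb) hzero

theorem stmt_6_general (b M : ℕ) (hb : 2 ≤ b) (n0 k0 : ℕ)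
    (hn : n0 < b^M) (hk : k0 < b^M) (dt : ℕ)
    (h2 : natShiftSub b M n0 k0 < b ^ (dt+1)) :
    n0 / b^(dt+1) = k0 / b^(dt+1) := by
  have hb0 : 0 < b := by omega
  refine eq_of_natDigit_eq ((Nat.div_le_self _ _).trans_lt hn) ((Nat.div_le_self _ _).trans_lt hk)
    fun j _ => ?_
  rw [natDigit_div_pow, natDigit_div_pow]
  by_cases hj : dt + 1 + j < M
  · exact natDigit_eq_of_natShiftSub_lt_pow hb0 hj
      (h2.trans_le (Nat.pow_le_pow_right hb0 (by omega)))
  · have hle : b ^ M ≤ b ^ (dt + 1 + j) := Nat.pow_le_pow_right hb0 (by omega)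
    rw [natDigit_eq_zero_of_lt_pow (hn.trans_le hle), natDigit_eq_zero_of_lt_pow (hk.trans_le hle)]

/-- if `‖n₀ ⊖ k₀‖_b = b^{d̃}` then `n₀` and `k₀` lie in the same
block of length `b^{d̃+1}`. -/
theorem stmt_6 (b M : ℕ) (hb : 2 ≤ b) (n0 k0 : ℕ)
    (hn : n0 < b^M) (hk : k0 < b^M) (dt : ℕ)
    (h1 : b ^ dt ≤ natShiftSub b M n0 k0)
    (h2 : natShiftSub b M n0 k0 < b ^ (dt+1)) :
    n0 / b^(dt+1) = k0 / b^(dt+1) :=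
  stmt_6_general b M hb n0 k0 hn hk dt h2
end

section
/- If (x_n)_{n ≥ 0} is a (t,s)-sequence in base b, then for every m > t the point set ((x_n, n/b^m))_{0 ≤ n < b^m} in [0,1)^{s+1} is a (t, m, s+1)-net in base b. -/
open Finset
open scoped Classical

/-!
The last coordinate `n / b^m` lies in `[a/b^d, (a+1)/b^d)` exactly when `n` runs through the
`a`-th block of length `b^(m-d)`. On that block the first `s` coordinates, truncated to `m - d`
digits, form a `(t, m-d, s)`-net by the sequence property; the truncation is harmless because an
elementary interval of depth at most `m - d` only sees the first `m - d` digits. When `m - d = t`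
the interval is the whole cube in the first `s` coordinates and the count is trivial.
-/

def InElemInterval (b d a : ℕ) (y : ℝ) : Prop :=
  (a : ℝ) / (b : ℝ) ^ d ≤ y ∧ y < ((a : ℝ) + 1) / (b : ℝ) ^ d

section Digits

variable {b : ℕ}

lemma natCast_div_pow_le_iff_le_floor (hb : 0 < b) {d m : ℕ} (hd : d ≤ m) (c : ℕ) {y : ℝ}
    (hy : 0 ≤ y) :
    (c : ℝ) / (b : ℝ) ^ d ≤ y ↔ c * b ^ (m - d) ≤ ⌊y * (b : ℝ) ^ m⌋₊ := by
  have hbR : (0 : ℝ) < b := by exact_mod_cast hb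
  have hpow : (b : ℝ) ^ m = (b : ℝ) ^ d * (b : ℝ) ^ (m - d) := by
    rw [← pow_add, Nat.add_sub_cancel' hd]
  rw [Nat.le_floor_iff (by positivity), div_le_iff₀ (by positivity), hpow,
    ← mul_assoc]
  push_cast
  exact (mul_le_mul_iff_of_pos_right (by positivity)).symm

lemma inElemInterval_iff_floor (hb : 0 < b) {d m : ℕ} (hd : d ≤ m) (a : ℕ) {y : ℝ}
    (hy : 0 ≤ y) :
    InElemInterval b d a y ↔
      a * b ^ (m - d) ≤ ⌊y * (b : ℝ) ^ m⌋₊ ∧ ⌊y * (b : ℝ) ^ m⌋₊ < (a + 1) * b ^ (m - d) := by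
  have hsucc := natCast_div_pow_le_iff_le_floor hb hd (a + 1) hy
  push_cast at hsucc
  rw [InElemInterval, natCast_div_pow_le_iff_le_floor hb hd a hy, ← not_le, hsucc, not_le]

lemma inElemInterval_natCast_div_pow_iff (hb : 0 < b) {d m : ℕ} (hd : d ≤ m) (a n : ℕ) :
    InElemInterval b d a ((n : ℝ) / (b : ℝ) ^ m) ↔
      a * b ^ (m - d) ≤ n ∧ n < (a + 1) * b ^ (m - d) := by
  have hbm : (b : ℝ) ^ m ≠ 0 := pow_ne_zero _ (by exact_mod_cast hb.ne')
  rw [inElemInterval_iff_floor hb hd a (by positivity), div_mul_cancel₀ _ hbm, Nat.floor_natCast]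

lemma btrunc_eq_floor_div (hb : 0 < b) (m : ℕ) {x : ℝ} (hx : x ∈ Set.Ico (0 : ℝ) 1) :
    btrunc b m x = (⌊x * (b : ℝ) ^ m⌋₊ : ℝ) / (b : ℝ) ^ m := by
  have hbR : (0 : ℝ) < b := by exact_mod_cast hb
  induction m with
  | zero => simp [btrunc, Nat.floor_eq_zero.2 hx.2]
  | succ m ih =>
    set N := ⌊x * (b : ℝ) ^ (m + 1)⌋₊
    have hdiv : N / b = ⌊x * (b : ℝ) ^ m⌋₊ := by
      rw [← Nat.floor_div_natCast, pow_succ, mul_div_assoc, mul_div_cancel_right₀ _ hbR.ne']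
    have hdigit : ((N % b : ℕ) : ℝ) = N - b * ⌊x * (b : ℝ) ^ m⌋₊ := by
      rw [← hdiv, eq_sub_iff_add_eq]
      exact_mod_cast Nat.mod_add_div N b
    rw [btrunc, Finset.sum_Icc_succ_top (by omega), ← btrunc, ih, bdigit, hdigit]
    field_simp
    ring

lemma inElemInterval_btrunc_iff (hb : 0 < b) {d m : ℕ} (hd : d ≤ m) (a : ℕ) {x : ℝ}
    (hx : x ∈ Set.Ico (0 : ℝ) 1) :
    InElemInterval b d a (btrunc b m x) ↔ InElemInterval b d a x := by
  have hbm : (b : ℝ) ^ m ≠ 0 := pow_ne_zero _ (by exact_mod_cast hb.ne')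
  have hfloor : ⌊btrunc b m x * (b : ℝ) ^ m⌋₊ = ⌊x * (b : ℝ) ^ m⌋₊ := by
    rw [btrunc_eq_floor_div hb m hx, div_mul_cancel₀ _ hbm, Nat.floor_natCast]
  rw [inElemInterval_iff_floor hb hd a (by rw [btrunc_eq_floor_div hb m hx]; positivity),
    inElemInterval_iff_floor hb hd a hx.1, hfloor]

end Digits

lemma card_filter_range_block (P : ℕ → Prop) {N L M : ℕ} (h : N + L ≤ M) :
    ((Finset.range M).filter fun n => (N ≤ n ∧ n < N + L) ∧ P n).card
      = ((Finset.range L).filter fun n => P (N + n)).card := by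
  refine Finset.card_bij' (fun n _ => n - N) (fun n _ => N + n) ?_ ?_ ?_ ?_
  · intro n hn
    simp only [Finset.mem_filter, Finset.mem_range] at hn ⊢
    obtain ⟨-, ⟨hNn, hnL⟩, hP⟩ := hn
    exact ⟨by omega, by rwa [Nat.add_sub_cancel' hNn]⟩
  · intro n hn
    simp only [Finset.mem_filter, Finset.mem_range] at hn ⊢
    exact ⟨by omega, by omega, hn.2⟩
  · intro n hn
    simp only [Finset.mem_filter] at hn
    omega
  · intro n _
    omega

/-- Unlike in `IsSeq`, the points are not truncated and `m = t` is allowed. -/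
lemma IsSeq.card_filter_block {b t s : ℕ} {x : ℕ → Fin s → ℝ} (hb : 0 < b)
    (hx : ∀ n i, x n i ∈ Set.Ico (0 : ℝ) 1) (hseq : IsSeq b t s x) (k m : ℕ)
    {d a : Fin s → ℕ} (ha : ∀ i, a i < b ^ d i) (hsum : (∑ i, d i) + t ≤ m) :
    ((Finset.range (b ^ m)).filter fun n =>
      ∀ i, InElemInterval b (d i) (a i) (x (k * b ^ m + n) i)).card = b ^ (m - ∑ i, d i) := by
  have hdm : ∀ i, d i ≤ m := fun i =>
    (Finset.single_le_sum (fun j _ => Nat.zero_le (d j)) (Finset.mem_univ i)).trans (by omega)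
  rcases (show t ≤ m by omega).lt_or_eq with htm | rfl
  · rw [← hseq k m htm d a ha hsum]
    congr 1
    refine Finset.filter_congr fun n _ => forall_congr' fun i => ?_
    exact (inElemInterval_btrunc_iff hb (hdm i) (a i) (hx _ i)).symm
  · have hd0 : ∀ i, d i = 0 := fun i => by
      simpa using (Finset.sum_eq_zero_iff.1 (by omega : ∑ i, d i = 0)) i
    have ha0 : ∀ i, a i = 0 := fun i => by simpa [hd0 i] using ha i
    rw [Finset.filter_true_of_mem, Finset.card_range, Finset.sum_eq_zero fun i _ => hd0 i,
      Nat.sub_zero]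
    intro n _ i
    simpa [InElemInterval, hd0 i, ha0 i] using hx (k * b ^ t + n) i

theorem stmt_11_general (b t s m : ℕ) (hb : 2 ≤ b) (x : ℕ → Fin s → ℝ)
    (hx : ∀ n i, x n i ∈ Set.Ico (0:ℝ) 1) (hseq : IsSeq b t s x) :
    IsNet b t m (s+1) (fun n => Fin.snoc (x n) ((n:ℝ)/(b:ℝ)^m)) := by
  intro d a ha hsum
  have hb0 : 0 < b := by omega
  rw [Fin.sum_univ_castSucc] at hsum ⊢
  set e := d (Fin.last s)
  set m' := m - e
  have hblock : a (Fin.last s) * b ^ m' + b ^ m' ≤ b ^ m := by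
    calc a (Fin.last s) * b ^ m' + b ^ m' = (a (Fin.last s) + 1) * b ^ m' := by ring
      _ ≤ b ^ e * b ^ m' := Nat.mul_le_mul_right _ (ha (Fin.last s))
      _ = b ^ m := by rw [← pow_add]; congr 1; omega
  calc _ = ((Finset.range (b ^ m)).filter fun n =>
          (a (Fin.last s) * b ^ m' ≤ n ∧ n < a (Fin.last s) * b ^ m' + b ^ m') ∧
          ∀ j : Fin s, InElemInterval b (d j.castSucc) (a j.castSucc) (x n j)).card := by
        congr 1
        refine Finset.filter_congr fun n _ => ?_
        rw [Fin.forall_fin_succ', and_comm]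
        simp only [Fin.snoc_castSucc, Fin.snoc_last]
        rw [← InElemInterval, inElemInterval_natCast_div_pow_iff hb0 (by omega), add_mul, one_mul]
        rfl
    _ = ((Finset.range (b ^ m')).filter fun n => ∀ j : Fin s,
          InElemInterval b (d j.castSucc) (a j.castSucc)
            (x (a (Fin.last s) * b ^ m' + n) j)).card := by
        convert card_filter_range_block _ hblock
    _ = b ^ (m' - ∑ j : Fin s, d j.castSucc) :=
        hseq.card_filter_block hb0 hx _ _ (fun j => ha j.castSucc) (by omega)
    _ = b ^ (m - (∑ j : Fin s, d j.castSucc + e)) := by congr 1; omega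

/-- if `(x_n)` is a `(t,s)`-sequence in base `b`, then for every
`m > t` the point set `((x_n, n/b^m))_{0 ≤ n < b^m}` is a `(t,m,s+1)`-net. -/
theorem stmt_11 (b t s m : ℕ) (hb : 2 ≤ b) (x : ℕ → Fin s → ℝ)
    (hx : ∀ n i, x n i ∈ Set.Ico (0:ℝ) 1) (hseq : IsSeq b t s x) (hm : t < m) :
    IsNet b t m (s+1) (fun n => Fin.snoc (x n) ((n:ℝ)/(b:ℝ)^m)) :=
  stmt_11_general b t s m hb x hx hseq
end

section
/- Roth-type truncation lemma (cited as [3, Lemma 3.7]): for any sequence (y_n)_{n≥0} in [0,1)^s and any m ≥ 1, 1 + sup_{1 ≤ N ≤ b^m} N·D*((y_n)_{n=0}^{N−1}) ≥ b^m · D*(((y_n, n/b^m))_{n=0}^{b^m−1}), where the right-hand side is the star discrepancy of the (s+1)-dimensional point set appending the coordinate n/b^m. -/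
/-!
Slice the box `[0, γ) × [0, g)` of the `(s+1)`-dimensional point set along its last coordinate:
the point `(y_n, n / M)` lies in it iff `n < N := ⌈M g⌉₊` and `y_n ∈ [0, γ)`. So the count is that
of the first `N` points of `y` in `[0, γ)`, which differs from `N ∏ γ` by at most `N · D*_N(y)`,
while `N ∏ γ` differs from the expected count `M g ∏ γ` by at most `1`.
-/

open Finset
open scoped Classical

section StarDiscrepancy

variable {s : ℕ}

lemma prod_nonneg_and_le_one_of_mem_Ioc {γ : Fin s → ℝ} (hγ : ∀ i, 0 < γ i ∧ γ i ≤ 1) :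
    0 ≤ ∏ i, γ i ∧ ∏ i, γ i ≤ 1 :=
  ⟨prod_nonneg fun i _ => (hγ i).1.le, prod_le_one (fun i _ => (hγ i).1.le) fun i _ => (hγ i).2⟩

lemma abs_card_filter_sub_le (N : ℕ) (y : ℕ → Fin s → ℝ) {γ : Fin s → ℝ}
    (hγ : ∀ i, 0 < γ i ∧ γ i ≤ 1) :
    |(#{n ∈ range N | ∀ i, y n i < γ i} : ℝ) - N * ∏ i, γ i| ≤ N := by
  obtain ⟨hπ₀, hπ₁⟩ := prod_nonneg_and_le_one_of_mem_Ioc hγ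
  refine abs_sub_le_of_nonneg_of_le (Nat.cast_nonneg _) ?_ (by positivity)
    (mul_le_of_le_one_right N.cast_nonneg hπ₁)
  exact_mod_cast (card_filter_le _ _).trans (card_range N).le

lemma starDisc_nonneg (N : ℕ) (y : ℕ → Fin s → ℝ) : 0 ≤ starDisc s N y :=
  Real.sSup_nonneg <| by rintro _ ⟨γ, -, rfl⟩; positivity

lemma starDisc_le_one (N : ℕ) (y : ℕ → Fin s → ℝ) : starDisc s N y ≤ 1 :=
  Real.sSup_le (by
    rintro _ ⟨γ, hγ, rfl⟩
    exact div_le_one_of_le₀ (abs_card_filter_sub_le N y hγ) N.cast_nonneg) zero_le_one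

lemma abs_card_filter_sub_le_mul_starDisc {N : ℕ} (hN : 0 < N) (y : ℕ → Fin s → ℝ)
    {γ : Fin s → ℝ} (hγ : ∀ i, 0 < γ i ∧ γ i ≤ 1) :
    |(#{n ∈ range N | ∀ i, y n i < γ i} : ℝ) - N * ∏ i, γ i| ≤ N * starDisc s N y := by
  have hbdd : BddAbove {v : ℝ | ∃ γ : Fin s → ℝ, (∀ i, 0 < γ i ∧ γ i ≤ 1) ∧
      v = |(#{n ∈ range N | ∀ i, y n i < γ i} : ℝ) - N * ∏ i, γ i| / N} := by
    refine ⟨1, ?_⟩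
    rintro _ ⟨γ, hγ, rfl⟩
    exact div_le_one_of_le₀ (abs_card_filter_sub_le N y hγ) N.cast_nonneg
  have hmem := le_csSup hbdd ⟨γ, hγ, rfl⟩
  rwa [div_le_iff₀' (by positivity)] at hmem

lemma filter_snoc_div_lt_eq {M : ℕ} (hM : 0 < M) (y : ℕ → Fin s → ℝ) {γ : Fin (s + 1) → ℝ}
    (hγ : γ (Fin.last s) ≤ 1) :
    {n ∈ range M | ∀ i, (Fin.snoc (y n) ((n : ℝ) / M) : Fin (s + 1) → ℝ) i < γ i}
      = {n ∈ range ⌈M * γ (Fin.last s)⌉₊ | ∀ i : Fin s, y n i < γ i.castSucc} := by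
  have hM' : (0 : ℝ) < M := by exact_mod_cast hM
  ext n
  simp only [mem_filter, mem_range, Fin.forall_fin_succ', Fin.snoc_castSucc, Fin.snoc_last,
    div_lt_iff₀ hM', Nat.lt_ceil, mul_comm (γ (Fin.last s))]
  have hle : (M : ℝ) * γ (Fin.last s) ≤ M := mul_le_of_le_one_right hM'.le hγ
  constructor
  · rintro ⟨-, hy, hn⟩
    exact ⟨hn, hy⟩
  · rintro ⟨hn, hy⟩
    exact ⟨by exact_mod_cast hn.trans_le hle, hy, hn⟩

lemma exists_abs_card_filter_snoc_sub_le {M : ℕ} (hM : 0 < M) (y : ℕ → Fin s → ℝ)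
    {γ : Fin (s + 1) → ℝ} (hγ : ∀ i, 0 < γ i ∧ γ i ≤ 1) :
    ∃ N : ℕ, 1 ≤ N ∧ N ≤ M ∧
      |(#{n ∈ range M | ∀ i, (Fin.snoc (y n) ((n : ℝ) / M) : Fin (s + 1) → ℝ) i < γ i} : ℝ)
        - M * ∏ i, γ i| ≤ 1 + N * starDisc s N y := by
  set g := γ (Fin.last s)
  obtain ⟨hg₀, hg₁⟩ := hγ (Fin.last s)
  set N := ⌈(M : ℝ) * g⌉₊
  have hMg : (0 : ℝ) < M * g := by positivity
  have hNg : |(N : ℝ) - M * g| ≤ 1 :=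
    abs_le.2 ⟨by linarith [Nat.le_ceil ((M : ℝ) * g)],
      by linarith [Nat.ceil_lt_add_one hMg.le]⟩
  have hN₁ : 1 ≤ N := Nat.ceil_pos.2 hMg
  have hNM : N ≤ M := Nat.ceil_le.2 (mul_le_of_le_one_right (Nat.cast_nonneg M) hg₁)
  refine ⟨N, hN₁, hNM, ?_⟩
  rw [filter_snoc_div_lt_eq hM y hg₁, Fin.prod_univ_castSucc]
  obtain ⟨hπ₀, hπ₁⟩ := prod_nonneg_and_le_one_of_mem_Ioc fun i => hγ i.castSucc
  have hc := abs_card_filter_sub_le_mul_starDisc hN₁ y fun i => hγ i.castSucc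
  set c : ℝ := ((#{n ∈ range N | ∀ i : Fin s, y n i < γ i.castSucc} : ℕ) : ℝ)
  set π := ∏ i : Fin s, γ i.castSucc
  calc |c - M * (π * g)| = |(c - N * π) + (N - M * g) * π| := by ring_nf
    _ ≤ |c - N * π| + |(N : ℝ) - M * g| * π :=
        (abs_add_le _ _).trans_eq (by rw [abs_mul, abs_of_nonneg hπ₀])
    _ ≤ N * starDisc s N y + 1 * 1 := add_le_add hc (mul_le_mul hNg hπ₁ hπ₀ zero_le_one)
    _ = 1 + N * starDisc s N y := by ring

theorem mul_starDisc_snoc_div_le (M : ℕ) (y : ℕ → Fin s → ℝ) :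
    (M : ℝ) * starDisc (s + 1) M (fun n => Fin.snoc (y n) ((n : ℝ) / M))
      ≤ 1 + sSup {v : ℝ | ∃ N : ℕ, 1 ≤ N ∧ N ≤ M ∧ v = N * starDisc s N y} := by
  set T := {v : ℝ | ∃ N : ℕ, 1 ≤ N ∧ N ≤ M ∧ v = N * starDisc s N y}
  have hT₀ : 0 ≤ sSup T :=
    Real.sSup_nonneg <| by
      rintro _ ⟨N, -, -, rfl⟩
      exact mul_nonneg N.cast_nonneg (starDisc_nonneg N y)
  rcases M.eq_zero_or_pos with rfl | hM
  · simp only [CharP.cast_eq_zero, zero_mul]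
    linarith
  have hT : BddAbove T := by
    refine ⟨M, ?_⟩
    rintro _ ⟨N, -, hNM, rfl⟩
    calc (N : ℝ) * starDisc s N y ≤ N * 1 :=
          mul_le_mul_of_nonneg_left (starDisc_le_one N y) N.cast_nonneg
      _ ≤ M := by rw [mul_one]; exact_mod_cast hNM
  have hM' : (0 : ℝ) < M := by exact_mod_cast hM
  rw [← le_div_iff₀' hM']
  refine Real.sSup_le ?_ (by positivity)
  rintro _ ⟨γ, hγ, rfl⟩
  obtain ⟨N, hN₁, hNM, hbox⟩ := exists_abs_card_filter_snoc_sub_le hM y hγ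
  gcongr
  exact hbox.trans (add_le_add_right (le_csSup hT ⟨N, hN₁, hNM, rfl⟩) 1)

end StarDiscrepancy

theorem stmt_18_general (b m s : ℕ)
    (y : ℕ → Fin s → ℝ) :
    1 + sSup {v : ℝ | ∃ N : ℕ, 1 ≤ N ∧ N ≤ b^m ∧
        v = (N : ℝ) * starDisc s N y}
      ≥ (b^m : ℝ) * starDisc (s+1) (b^m)
          (fun n => Fin.snoc (y n) ((n:ℝ)/(b:ℝ)^m)) := by
  simpa only [Nat.cast_pow] using mul_starDisc_snoc_div_le (b ^ m) y

/-- Roth-type truncation lemma, [3, Lemma 3.7]: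
`1 + sup_{1 ≤ N ≤ b^m} N·D*((y_n)_{n<N}) ≥ b^m · D*(((y_n, n/b^m))_{n<b^m})`. -/
theorem stmt_18 (b m s : ℕ) (hb : 2 ≤ b) (hm : 1 ≤ m)
    (y : ℕ → Fin s → ℝ) (hy : ∀ n i, y n i ∈ Set.Ico (0:ℝ) 1) :
    1 + sSup {v : ℝ | ∃ N : ℕ, 1 ≤ N ∧ N ≤ b^m ∧
        v = (N : ℝ) * starDisc s N y}
      ≥ (b^m : ℝ) * starDisc (s+1) (b^m)
          (fun n => Fin.snoc (y n) ((n:ℝ)/(b:ℝ)^m)) :=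
  stmt_18_general b m s y
end
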